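/- In the binary symmetric example, let X ~ Bern(1/2), Y = X ⊕ Z with Z ~ Bern(α), 0 ≤ α < 1/2, and let R > 0, ε ∈ [0,1) with R/(1−ε) ≤ 1. Then max over conditional pmfs P_{U|X} with (1−ε)I(U;X) ≤ R of I(U;Y) equals 1 − h_b(h_b^{−1}(1 − R/(1−ε)) ⋆ α), where a ⋆ b = a(1−b) + b(1−a), h_b is binary entropy, and h_b^{−1} : [0,1] → [0,1/2] is its inverse. -/

import Mathlib

noncomputable section
open scoped BigOperators
attribute [local instance] Classical.propDecidable

/-- Binary entropy function (base-2 logarithms), convention `0 log 0 = 0`. -/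
noncomputable def hb (p : ℝ) : ℝ :=
  -(p * Real.logb 2 p) - (1 - p) * Real.logb 2 (1 - p)

/-- Inverse of the binary entropy function, mapping `[0,1]` to `[0,1/2]`. -/
noncomputable def hbInv (y : ℝ) : ℝ :=
  sSup {p : ℝ | p ∈ Set.Icc (0 : ℝ) (1 / 2) ∧ hb p ≤ y}

/-- Mutual information (base 2) computed from a joint pmf on a product of finite sets,
convention `0 log 0 = 0`. -/
noncomputable def miJ {A B : Type*} [Fintype A] [Fintype B] (q : A → B → ℝ) : ℝ :=
  ∑ a, ∑ b, if q a b = 0 then 0 else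
    q a b * Real.logb 2 (q a b / ((∑ b', q a b') * (∑ a', q a' b)))

open Real Set

/-!
For a joint pmf of `(U, X)` with uniform `X`, put `wₐ = P(U = a)` and `ξₐ = P(X = 1 | U = a)`.
Then `I(U;X) = 1 - ∑ₐ wₐ h(ξₐ)` and `I(U;Y) = 1 - ∑ₐ wₐ h(ξₐ ⋆ α)`, and `h(ξ ⋆ α) = f(h(ξ))`
for Mrs. Gerber's function `f(y) = h(h⁻¹(y) ⋆ α)`. So the bound `I(U;Y) ≤ 1 - f(c)`,
`c = 1 - R/(1-ε)`, is Jensen's inequality for the convex function `f` followed by its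
monotonicity, and it is attained by a binary `U` with `X = U ⊕ Bern(h⁻¹(c))`.

Convexity of `f`: by Cauchy's mean value theorem its slopes are `(1-2α) L(ξ ⋆ α) / L(ξ)` with
`L(t) = log((1-t)/t)`, and this ratio increases on `(0,1/2)` because `t(1-t) L(t) / (1-2t)` does,
which comes down to `L(t) ≥ 2(1-2t)`.
-/

lemma log_two_pos : 0 < log 2 := log_pos one_lt_two

lemma hb_eq_binEntropy_div (p : ℝ) : hb p = binEntropy p / log 2 := by
  simp only [hb, binEntropy, logb, log_inv]; ring

lemma hb_one_sub (p : ℝ) : hb (1 - p) = hb p := by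
  simp only [hb_eq_binEntropy_div, binEntropy_one_sub]

lemma hb_half : hb (1 / 2) = 1 := by
  rw [hb_eq_binEntropy_div, one_div, binEntropy_two_inv, div_self log_two_pos.ne']

lemma hb_nonneg {p : ℝ} (hp : p ∈ Icc (0 : ℝ) 1) : 0 ≤ hb p := by
  rw [hb_eq_binEntropy_div]; exact div_nonneg (binEntropy_nonneg hp.1 hp.2) log_two_pos.le

lemma hb_le_one (p : ℝ) : hb p ≤ 1 := by
  rw [hb_eq_binEntropy_div, div_le_one log_two_pos]; exact binEntropy_le_log_two

lemma continuous_hb : Continuous hb := by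
  simp only [funext hb_eq_binEntropy_div]; exact binEntropy_continuous.div_const _

lemma hb_strictMonoOn : StrictMonoOn hb (Icc (0 : ℝ) (1 / 2)) := by
  intro x hx y hy hxy
  simp only [hb_eq_binEntropy_div]
  rw [one_div] at hx hy
  exact div_lt_div_of_pos_right (binEntropy_strictMonoOn hx hy hxy) log_two_pos

lemma hbInv_hb {t : ℝ} (ht : t ∈ Icc (0 : ℝ) (1 / 2)) : hbInv (hb t) = t := by
  have hset : {p : ℝ | p ∈ Icc (0 : ℝ) (1 / 2) ∧ hb p ≤ hb t} = Icc 0 t := by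
    ext p
    constructor
    · rintro ⟨hp, hle⟩
      exact ⟨hp.1, (hb_strictMonoOn.le_iff_le hp ht).1 hle⟩
    · rintro ⟨h0, hpt⟩
      have hp : p ∈ Icc (0 : ℝ) (1 / 2) := ⟨h0, hpt.trans ht.2⟩
      exact ⟨hp, (hb_strictMonoOn.le_iff_le hp ht).2 hpt⟩
  rw [hbInv, hset, csSup_Icc ht.1]

lemma exists_hb_eq {y : ℝ} (hy : y ∈ Icc (0 : ℝ) 1) : ∃ t ∈ Icc (0 : ℝ) (1 / 2), hb t = y :=
  intermediate_value_Icc (by norm_num) continuous_hb.continuousOn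
    (by rwa [hb_half, hb_eq_binEntropy_div, binEntropy_zero, zero_div])

lemma hbInv_mem_Icc {y : ℝ} (hy : y ∈ Icc (0 : ℝ) 1) : hbInv y ∈ Icc (0 : ℝ) (1 / 2) := by
  obtain ⟨t, ht, rfl⟩ := exists_hb_eq hy
  rwa [hbInv_hb ht]

lemma hb_hbInv {y : ℝ} (hy : y ∈ Icc (0 : ℝ) 1) : hb (hbInv y) = y := by
  obtain ⟨t, ht, rfl⟩ := exists_hb_eq hy
  rw [hbInv_hb ht]

lemma hbInv_strictMonoOn : StrictMonoOn hbInv (Icc (0 : ℝ) 1) := by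
  intro x hx y hy hxy
  obtain ⟨s, hs, rfl⟩ := exists_hb_eq hx
  obtain ⟨t, ht, rfl⟩ := exists_hb_eq hy
  rw [hbInv_hb hs, hbInv_hb ht]
  exact (hb_strictMonoOn.lt_iff_lt hs ht).1 hxy

def negLogit (t : ℝ) : ℝ := log (1 - t) - log t

lemma hasDerivAt_hb {t : ℝ} (h0 : t ≠ 0) (h1 : t ≠ 1) :
    HasDerivAt hb (negLogit t / log 2) t := by
  rw [show hb = fun x => binEntropy x / log 2 from funext hb_eq_binEntropy_div]
  exact (hasDerivAt_binEntropy h0 h1).div_const _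

lemma hasDerivAt_negLogit {t : ℝ} (h0 : t ≠ 0) (h1 : t ≠ 1) :
    HasDerivAt negLogit (-(t * (1 - t))⁻¹) t := by
  have h1' : 1 - t ≠ 0 := sub_ne_zero.mpr h1.symm
  have h := (((hasDerivAt_id t).const_sub 1).log h1').sub (hasDerivAt_log h0)
  refine h.congr_deriv ?_
  simp only [id]
  field_simp
  ring

lemma negLogit_pos {t : ℝ} (h0 : 0 < t) (h1 : t < 1 / 2) : 0 < negLogit t :=
  sub_pos.mpr (log_lt_log h0 (by linarith))

/-- The first term of `log ((1 + s) / (1 - s)) = 2 ∑ s ^ (2k+1) / (2k+1)`, at `s = 1 - 2t`. -/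
lemma two_mul_one_sub_two_mul_le_negLogit {t : ℝ} (h0 : 0 < t) (h1 : t ≤ 1 / 2) :
    2 * (1 - 2 * t) ≤ negLogit t := by
  have hs : 0 ≤ 1 - 2 * t := by linarith
  have hseries := hasSum_log_sub_log_of_abs_lt_one (x := 1 - 2 * t)
    (by rw [abs_of_nonneg hs]; linarith)
  have hfirst := le_hasSum hseries 0 fun k _ => by positivity
  have e1 : log (1 + (1 - 2 * t)) = log 2 + log (1 - t) := by
    rw [← log_mul two_ne_zero (by linarith)]; ring_nf
  have e2 : log (1 - (1 - 2 * t)) = log 2 + log t := by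
    rw [← log_mul two_ne_zero h0.ne']; ring_nf
  rw [e1, e2] at hfirst
  simp only [negLogit]
  norm_num at hfirst
  linarith

lemma monotoneOn_Ioo_of_hasDerivAt_nonneg {a b : ℝ} {f f' : ℝ → ℝ}
    (hf : ∀ x ∈ Ioo a b, HasDerivAt f (f' x) x) (hf' : ∀ x ∈ Ioo a b, 0 ≤ f' x) :
    MonotoneOn f (Ioo a b) :=
  monotoneOn_of_hasDerivWithinAt_nonneg (convex_Ioo a b)
    (fun x hx => (hf x hx).continuousAt.continuousWithinAt)
    (fun x hx => (hf x (by rwa [interior_Ioo] at hx)).hasDerivWithinAt)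
    (fun x hx => hf' x (by rwa [interior_Ioo] at hx))

lemma monotoneOn_mul_one_sub_mul_negLogit_div :
    MonotoneOn (fun t => t * (1 - t) * negLogit t / (1 - 2 * t)) (Ioo 0 (1 / 2)) := by
  refine monotoneOn_Ioo_of_hasDerivAt_nonneg
    (f' := fun t => (((1 - 2 * t) * negLogit t - 1) * (1 - 2 * t)
      + 2 * (t * (1 - t) * negLogit t)) / (1 - 2 * t) ^ 2) (fun t ht => ?_) (fun t ht => ?_)
  · have h0 : t ≠ 0 := ht.1.ne'
    have h1 : 1 - t ≠ 0 := by linarith [ht.2]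
    have hnum : HasDerivAt (fun t => t * (1 - t) * negLogit t) ((1 - 2 * t) * negLogit t - 1) t := by
      refine (((hasDerivAt_id t).mul ((hasDerivAt_id t).const_sub 1)).mul
        (hasDerivAt_negLogit h0 (by linarith [ht.2]))).congr_deriv ?_
      simp only [id, Pi.mul_apply]
      field_simp
      ring
    have hden : HasDerivAt (fun t : ℝ => 1 - 2 * t) (-2) t := by
      simpa using ((hasDerivAt_id t).const_mul 2).const_sub 1
    refine (hnum.div hden (by linarith [ht.2])).congr_deriv ?_
    ring
  · have hL := two_mul_one_sub_two_mul_le_negLogit ht.1 ht.2.le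
    have hq : 0 ≤ 1 - 2 * t + 2 * t ^ 2 := by nlinarith
    have hcube : 0 ≤ (1 - 2 * t) ^ 3 := pow_nonneg (by linarith [ht.2]) 3
    exact div_nonneg (by nlinarith [mul_le_mul_of_nonneg_right hL hq]) (sq_nonneg _)

def binConv (a b : ℝ) : ℝ := a * (1 - b) + b * (1 - a)

lemma binConv_one_sub_left (a b : ℝ) : binConv (1 - a) b = 1 - binConv a b := by
  unfold binConv; ring

lemma one_sub_two_mul_binConv (a b : ℝ) : 1 - 2 * binConv a b = (1 - 2 * a) * (1 - 2 * b) := by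
  unfold binConv; ring

lemma binConv_mem_Icc {a b : ℝ} (ha : a ∈ Icc (0 : ℝ) (1 / 2)) (h0 : 0 ≤ b) (h1 : b ≤ 1 / 2) :
    binConv a b ∈ Icc a (1 / 2) := by
  unfold binConv; constructor <;> nlinarith [ha.1, ha.2]

lemma hasDerivAt_binConv_left (a b : ℝ) : HasDerivAt (fun a => binConv a b) (1 - 2 * b) a := by
  refine (((hasDerivAt_id a).mul_const (1 - b)).add
    (((hasDerivAt_id a).const_sub 1).const_mul b)).congr_deriv ?_
  ring

section MrsGerber

variable {α : ℝ}

lemma one_sub_two_mul_mul_negLogit_le (hα0 : 0 ≤ α) (hα1 : α < 1 / 2) {δ : ℝ}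
    (hδ : δ ∈ Ioo (0 : ℝ) (1 / 2)) :
    (1 - 2 * α) * (δ * (1 - δ) * negLogit δ)
      ≤ binConv δ α * (1 - binConv δ α) * negLogit (binConv δ α) := by
  set β := binConv δ α
  have hβ := binConv_mem_Icc (Ioo_subset_Icc_self hδ) hα0 hα1.le
  have hβ2 : 1 - 2 * β = (1 - 2 * α) * (1 - 2 * δ) := by
    rw [one_sub_two_mul_binConv]; ring
  have hβlt : β < 1 / 2 := by nlinarith [hδ.2]
  have hG := monotoneOn_mul_one_sub_mul_negLogit_div hδ ⟨hδ.1.trans_le hβ.1, hβlt⟩ hβ.1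
  have hδpos : 0 < 1 - 2 * δ := by linarith [hδ.2]
  simp only at hG
  rw [hβ2, div_le_div_iff₀ hδpos (by nlinarith)] at hG
  nlinarith

lemma monotoneOn_negLogit_binConv_div (hα0 : 0 ≤ α) (hα1 : α < 1 / 2) :
    MonotoneOn (fun δ => negLogit (binConv δ α) / negLogit δ) (Ioo 0 (1 / 2)) := by
  have hβ : ∀ δ ∈ Ioo (0 : ℝ) (1 / 2), binConv δ α ∈ Ioo (0 : ℝ) (1 / 2) := fun δ hδ => by
    have h := binConv_mem_Icc (Ioo_subset_Icc_self hδ) hα0 hα1.le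
    exact ⟨hδ.1.trans_le h.1, by nlinarith [one_sub_two_mul_binConv δ α, hδ.2]⟩
  refine monotoneOn_Ioo_of_hasDerivAt_nonneg (f' := fun δ =>
    (-(binConv δ α * (1 - binConv δ α))⁻¹ * (1 - 2 * α) * negLogit δ
      - negLogit (binConv δ α) * -(δ * (1 - δ))⁻¹) / negLogit δ ^ 2)
    (fun δ hδ => ?_) (fun δ hδ => ?_)
  · exact (((hasDerivAt_negLogit (hβ δ hδ).1.ne' (by linarith [(hβ δ hδ).2])).comp δ
      (hasDerivAt_binConv_left δ α)).div
      (hasDerivAt_negLogit hδ.1.ne' (by linarith [hδ.2])) (negLogit_pos hδ.1 hδ.2).ne')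
  · have hkey := one_sub_two_mul_mul_negLogit_le hα0 hα1 hδ
    obtain ⟨hβ0, hβ1⟩ := hβ δ hδ
    set β := binConv δ α
    have hδ0 := hδ.1
    have hδ1 : 0 < 1 - δ := by linarith [hδ.2]
    have hβ1' : 0 < 1 - β := by linarith
    have hnum : -(β * (1 - β))⁻¹ * (1 - 2 * α) * negLogit δ - negLogit β * -(δ * (1 - δ))⁻¹
        = (β * (1 - β) * negLogit β - (1 - 2 * α) * (δ * (1 - δ) * negLogit δ))
          / (δ * (1 - δ) * (β * (1 - β))) := by
      have := hδ0.ne'; have := hβ0.ne'; have := hδ1.ne'; have := hβ1'.ne'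
      field_simp
      ring
    have : 0 < δ * (1 - δ) * (β * (1 - β)) := by positivity
    rw [hnum]
    exact div_nonneg (div_nonneg (by linarith) this.le) (sq_nonneg _)

lemma exists_slope_hb_binConv_eq (hα0 : 0 ≤ α) (hα1 : α < 1 / 2) {u v : ℝ} (hu : 0 ≤ u)
    (huv : u < v) (hv : v ≤ 1 / 2) :
    ∃ ξ ∈ Ioo u v, (hb (binConv v α) - hb (binConv u α)) / (hb v - hb u)
      = (1 - 2 * α) * (negLogit (binConv ξ α) / negLogit ξ) := by
  have hξ : ∀ ξ ∈ Ioo u v, ξ ∈ Ioo (0 : ℝ) (1 / 2) := fun ξ h =>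
    ⟨hu.trans_lt h.1, h.2.trans_le hv⟩
  obtain ⟨ξ, hξuv, hcauchy⟩ := exists_ratio_hasDerivAt_eq_ratio_slope (fun x => hb (binConv x α))
    (fun ξ => negLogit (binConv ξ α) / log 2 * (1 - 2 * α)) huv
    (continuous_hb.comp (by unfold binConv; fun_prop)).continuousOn
    (fun ξ h => by
      have hβ := binConv_mem_Icc (Ioo_subset_Icc_self (hξ ξ h)) hα0 hα1.le
      exact (hasDerivAt_hb ((hξ ξ h).1.trans_le hβ.1).ne' (by linarith [hβ.2])).comp ξ
        (hasDerivAt_binConv_left ξ α))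
    hb (fun ξ => negLogit ξ / log 2) continuous_hb.continuousOn
    (fun ξ h => hasDerivAt_hb (hξ ξ h).1.ne' (by linarith [(hξ ξ h).2]))
  refine ⟨ξ, hξuv, ?_⟩
  have hL := (negLogit_pos (hξ ξ hξuv).1 (hξ ξ hξuv).2).ne'
  have hhb : hb v - hb u ≠ 0 :=
    (sub_pos.2 (hb_strictMonoOn ⟨hu, huv.le.trans hv⟩ ⟨hu.trans huv.le, hv⟩ huv)).ne'
  have := log_two_pos.ne'
  rw [div_eq_iff hhb]
  field_simp at hcauchy ⊢
  linear_combination -hcauchy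

def mrsGerber (α y : ℝ) : ℝ := hb (binConv (hbInv y) α)

lemma convexOn_mrsGerber (hα0 : 0 ≤ α) (hα1 : α < 1 / 2) :
    ConvexOn ℝ (Icc 0 1) (mrsGerber α) := by
  refine convexOn_of_slope_mono_adjacent (convex_Icc 0 1) fun {x y z} hx hz hxy hyz => ?_
  have hy : y ∈ Icc (0 : ℝ) 1 := ⟨hx.1.trans hxy.le, hyz.le.trans hz.2⟩
  have hxy' := hbInv_strictMonoOn hx hy hxy
  have hyz' := hbInv_strictMonoOn hy hz hyz
  obtain ⟨ξ₁, hξ₁, h₁⟩ := exists_slope_hb_binConv_eq hα0 hα1 (hbInv_mem_Icc hx).1 hxy'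
    (hbInv_mem_Icc hy).2
  obtain ⟨ξ₂, hξ₂, h₂⟩ := exists_slope_hb_binConv_eq hα0 hα1 (hbInv_mem_Icc hy).1 hyz'
    (hbInv_mem_Icc hz).2
  rw [hb_hbInv hx, hb_hbInv hy] at h₁
  rw [hb_hbInv hy, hb_hbInv hz] at h₂
  simp only [mrsGerber]
  rw [h₁, h₂]
  refine mul_le_mul_of_nonneg_left (monotoneOn_negLogit_binConv_div hα0 hα1
    ⟨(hbInv_mem_Icc hx).1.trans_lt hξ₁.1, hξ₁.2.trans_le (hbInv_mem_Icc hy).2⟩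
    ⟨(hbInv_mem_Icc hy).1.trans_lt hξ₂.1, hξ₂.2.trans_le (hbInv_mem_Icc hz).2⟩
    (hξ₁.2.trans hξ₂.1).le) (by linarith)

lemma monotoneOn_mrsGerber (hα0 : 0 ≤ α) (hα1 : α < 1 / 2) :
    MonotoneOn (mrsGerber α) (Icc 0 1) := by
  intro x hx y hy hxy
  have hxy' := hbInv_strictMonoOn.monotoneOn hx hy hxy
  have hx' := binConv_mem_Icc (hbInv_mem_Icc hx) hα0 hα1.le
  have hy' := binConv_mem_Icc (hbInv_mem_Icc hy) hα0 hα1.le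
  refine hb_strictMonoOn.monotoneOn ⟨(hbInv_mem_Icc hx).1.trans hx'.1, hx'.2⟩
    ⟨(hbInv_mem_Icc hy).1.trans hy'.1, hy'.2⟩ ?_
  unfold binConv
  nlinarith

lemma hb_binConv_eq_mrsGerber {ξ : ℝ} (hξ : ξ ∈ Icc (0 : ℝ) 1) :
    hb (binConv ξ α) = mrsGerber α (hb ξ) := by
  rcases le_total ξ (1 / 2) with h | h
  · rw [mrsGerber, hbInv_hb ⟨hξ.1, h⟩]
  · rw [mrsGerber, ← hb_one_sub ξ, hbInv_hb ⟨by linarith [hξ.2], by linarith⟩,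
      binConv_one_sub_left, hb_one_sub]

end MrsGerber

section MutualInformation

variable {A : Type*} [Fintype A]

def bscOutput (α : ℝ) (q : A → Bool → ℝ) : A → Bool → ℝ :=
  fun a y => ∑ x, q a x * (if y = x then 1 - α else α)

lemma miJ_row_eq (a b : ℝ) :
    ((if a = 0 then 0 else a * logb 2 (a / ((a + b) * (1 / 2))))
      + if b = 0 then 0 else b * logb 2 (b / ((a + b) * (1 / 2))))
      = (a + b) - (a + b) * hb (a / (a + b)) := by
  by_cases hs : a + b = 0
  · simp [hs]
  have hterm : ∀ x, (if x = 0 then 0 else x * logb 2 (x / ((a + b) * (1 / 2))))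
      = x + x * logb 2 (x / (a + b)) := fun x => by
    split_ifs with hx
    · simp [hx]
    · rw [show x / ((a + b) * (1 / 2)) = 2 * (x / (a + b)) by field_simp,
        logb_mul two_ne_zero (div_ne_zero hx hs), logb_self_eq_one one_lt_two]
      ring
  rw [hterm, hterm, hb, show 1 - a / (a + b) = b / (a + b) by field_simp; ring]
  field_simp
  ring

lemma miJ_eq_one_sub_sum_hb (q : A → Bool → ℝ) (hcol : ∀ x, ∑ a, q a x = 1 / 2) :
    miJ q = 1 - ∑ a, (q a true + q a false) * hb (q a true / (q a true + q a false)) := by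
  have hrow : ∀ a, (∑ b, if q a b = 0 then 0 else
      q a b * logb 2 (q a b / ((∑ b', q a b') * ∑ a', q a' b)))
      = (q a true + q a false) - (q a true + q a false) * hb (q a true / (q a true + q a false)) :=
    fun a => by
      rw [Fintype.sum_bool, Fintype.sum_bool (q a), hcol, hcol]
      exact miJ_row_eq _ _
  have htotal : ∑ a, (q a true + q a false) = 1 := by
    rw [Finset.sum_add_distrib, hcol, hcol]; norm_num
  rw [miJ, Finset.sum_congr rfl fun a _ => hrow a, Finset.sum_sub_distrib, htotal]

lemma sum_bscOutput (α : ℝ) {q : A → Bool → ℝ} (hcol : ∀ x, ∑ a, q a x = 1 / 2) (y : Bool) :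
    ∑ a, bscOutput α q a y = 1 / 2 := by
  simp only [bscOutput, Fintype.sum_bool, Finset.sum_add_distrib, ← Finset.sum_mul, hcol]
  cases y <;> simp <;> ring

lemma miJ_bscOutput_eq (α : ℝ) (q : A → Bool → ℝ) (hcol : ∀ x, ∑ a, q a x = 1 / 2) :
    miJ (bscOutput α q) = 1 - ∑ a, (q a true + q a false)
      * hb (binConv (q a true / (q a true + q a false)) α) := by
  rw [miJ_eq_one_sub_sum_hb _ (sum_bscOutput α hcol)]
  congr 1
  refine Finset.sum_congr rfl fun a _ => ?_
  have htrue : bscOutput α q a true = q a true * (1 - α) + q a false * α := by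
    simp [bscOutput]
  have hfalse : bscOutput α q a false = q a true * α + q a false * (1 - α) := by
    simp [bscOutput]
  have hmass : bscOutput α q a true + bscOutput α q a false = q a true + q a false := by
    rw [htrue, hfalse]; ring
  rw [hmass]
  by_cases hw : q a true + q a false = 0
  · simp [hw]
  congr 2
  rw [htrue, binConv]
  field_simp
  ring

lemma miJ_bscOutput_le {α c : ℝ} (hα0 : 0 ≤ α) (hα1 : α < 1 / 2) (hc0 : 0 ≤ c)
    (q : A → Bool → ℝ) (hq : ∀ a x, 0 ≤ q a x) (hcol : ∀ x, ∑ a, q a x = 1 / 2)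
    (hc : c ≤ 1 - miJ q) :
    miJ (bscOutput α q) ≤ 1 - mrsGerber α c := by
  rw [miJ_eq_one_sub_sum_hb q hcol, sub_sub_cancel] at hc
  rw [miJ_bscOutput_eq α q hcol, sub_le_sub_iff_left]
  set w : A → ℝ := fun a => q a true + q a false
  set ξ : A → ℝ := fun a => q a true / w a
  have hw : ∀ a, 0 ≤ w a := fun a => add_nonneg (hq a true) (hq a false)
  have hwsum : ∑ a, w a = 1 := by
    simp only [w, Finset.sum_add_distrib, hcol]; norm_num
  have hξ : ∀ a, ξ a ∈ Icc (0 : ℝ) 1 := fun a =>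
    ⟨div_nonneg (hq a true) (hw a), div_le_one_of_le₀ (le_add_of_nonneg_right (hq a false)) (hw a)⟩
  have hH : ∀ a, hb (ξ a) ∈ Icc (0 : ℝ) 1 := fun a => ⟨hb_nonneg (hξ a), hb_le_one _⟩
  have hHmean : ∑ a, w a * hb (ξ a) ∈ Icc (0 : ℝ) 1 := by
    simpa only [smul_eq_mul] using
      (convex_Icc (0 : ℝ) 1).sum_mem (fun a _ => hw a) hwsum fun a _ => hH a
  replace hc : c ≤ ∑ a, w a * hb (ξ a) := hc
  calc mrsGerber α c ≤ mrsGerber α (∑ a, w a * hb (ξ a)) :=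
        monotoneOn_mrsGerber hα0 hα1 ⟨hc0, hc.trans hHmean.2⟩ hHmean hc
    _ ≤ ∑ a, w a * mrsGerber α (hb (ξ a)) := by
        simpa only [smul_eq_mul] using (convexOn_mrsGerber hα0 hα1).map_sum_le
          (fun a _ => hw a) hwsum fun a _ => hH a
    _ = ∑ a, w a * hb (binConv (ξ a) α) := by
        simp only [hb_binConv_eq_mrsGerber (hξ _)]

end MutualInformation

lemma exists_miJ_eq_and_miJ_bscOutput_eq (α : ℝ) {c : ℝ} (hc : c ∈ Icc (0 : ℝ) 1) :
    ∃ q : Fin 2 → Bool → ℝ, (∀ u x, 0 ≤ q u x) ∧ (∀ x, ∑ u, q u x = 1 / 2) ∧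
      miJ q = 1 - c ∧ miJ (bscOutput α q) = 1 - mrsGerber α c := by
  obtain ⟨hδ0, hδ1⟩ := hbInv_mem_Icc hc
  have hhb : hb (hbInv c) = c := hb_hbInv hc
  set δ := hbInv c
  set q : Fin 2 → Bool → ℝ :=
    ![fun x => bif x then (1 - δ) / 2 else δ / 2, fun x => bif x then δ / 2 else (1 - δ) / 2]
  have hcol : ∀ x, ∑ u, q u x = 1 / 2 := by
    intro x; cases x <;> simp [q, Fin.sum_univ_two] <;> ring
  have hrow : ∀ u, q u true + q u false = 1 / 2 := by
    intro u; fin_cases u <;> simp [q] <;> ring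
  refine ⟨q, fun u x => ?_, hcol, ?_, ?_⟩
  · fin_cases u <;> cases x <;> simp [q] <;> linarith
  · rw [miJ_eq_one_sub_sum_hb q hcol, Fin.sum_univ_two, hrow, hrow]
    simp only [q, Matrix.cons_val_zero, Matrix.cons_val_one, cond_true]
    rw [show (1 - δ) / 2 / (1 / 2 : ℝ) = 1 - δ by ring, show δ / 2 / (1 / 2 : ℝ) = δ by ring,
      hb_one_sub, hhb]
    ring
  · rw [miJ_bscOutput_eq α q hcol, Fin.sum_univ_two, hrow, hrow]
    simp only [q, Matrix.cons_val_zero, Matrix.cons_val_one, cond_true]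
    rw [show (1 - δ) / 2 / (1 / 2 : ℝ) = 1 - δ by ring, show δ / 2 / (1 / 2 : ℝ) = δ by ring,
      binConv_one_sub_left, hb_one_sub, mrsGerber]
    ring

theorem stmt15_general (α R ε : ℝ) (hα0 : 0 ≤ α) (hα1 : α < 1 / 2)
    (hR : 0 < R) (hε1 : ε < 1) (hRε : R / (1 - ε) ≤ 1) :
    sSup {r : ℝ | ∃ (k : ℕ) (p : Fin k → Bool → ℝ),
        (∀ u x, 0 ≤ p u x) ∧ (∀ x, ∑ u, p u x = 1 / 2) ∧
        (1 - ε) * miJ p ≤ R ∧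
        r = miJ (fun (u : Fin k) (y : Bool) =>
              ∑ x, p u x * (if y = x then 1 - α else α))}
      = 1 - hb (hbInv (1 - R / (1 - ε)) * (1 - α)
          + α * (1 - hbInv (1 - R / (1 - ε)))) := by
  have hε : 0 < 1 - ε := by linarith
  set c := 1 - R / (1 - ε)
  have hc : c ∈ Icc (0 : ℝ) 1 := ⟨by linarith, by linarith [div_pos hR hε]⟩
  have hconstraint : ∀ I, (1 - ε) * I ≤ R ↔ c ≤ 1 - I := fun I => by
    rw [← le_div_iff₀' hε]; constructor <;> intro h <;> linarith
  refine IsGreatest.csSup_eq ⟨?_, ?_⟩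
  · obtain ⟨q, hq, hcol, hI, hIY⟩ := exists_miJ_eq_and_miJ_bscOutput_eq α hc
    exact ⟨2, q, hq, hcol, (hconstraint _).2 (by rw [hI, sub_sub_cancel]), hIY.symm⟩
  · rintro r ⟨k, q, hq, hcol, hI, rfl⟩
    exact miJ_bscOutput_le hα0 hα1 hc.1 q hq hcol ((hconstraint _).1 hI)

/-- Mrs. Gerber evaluation for the binary symmetric example: with `X ~ Bern(1/2)`,
`Y = X ⊕ Z`, `Z ~ Bern(α)`, `0 ≤ α < 1/2`, `R > 0`, `ε ∈ [0,1)`, `R/(1−ε) ≤ 1`,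
the maximum of `I(U;Y)` over conditional pmfs `P_{U|X}` (equivalently, joint pmfs of `(U,X)`
with uniform `X`-marginal) with `(1−ε)·I(U;X) ≤ R` equals
`1 − h_b(h_b⁻¹(1 − R/(1−ε)) ⋆ α)` where `a ⋆ b = a(1−b) + b(1−a)`. -/
theorem stmt15 (α R ε : ℝ) (hα0 : 0 ≤ α) (hα1 : α < 1 / 2)
    (hR : 0 < R) (hε0 : 0 ≤ ε) (hε1 : ε < 1) (hRε : R / (1 - ε) ≤ 1) :
    sSup {r : ℝ | ∃ (k : ℕ) (p : Fin k → Bool → ℝ),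
        (∀ u x, 0 ≤ p u x) ∧ (∀ x, ∑ u, p u x = 1 / 2) ∧
        (1 - ε) * miJ p ≤ R ∧
        r = miJ (fun (u : Fin k) (y : Bool) =>
              ∑ x, p u x * (if y = x then 1 - α else α))}
      = 1 - hb (hbInv (1 - R / (1 - ε)) * (1 - α)
          + α * (1 - hbInv (1 - R / (1 - ε)))) :=
  stmt15_general α R ε hα0 hα1 hR hε1 hRε
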